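/- arXiv:1608.05506 — 3 statements merged into one kernel-verified Lean document; each statement's English description precedes it below -/
import Mathlib

section
/- Let μ₁ > μ₂ > … > μ_{p₁} > 0 be distinct positive reals with multiplicities m₁,…,m_{p₁} ≥ 1, and let M be the block-diagonal matrix with diagonal blocks μ₁·J_{2m₁},…,μ_{p₁}·J_{2m_{p₁}} (indexed by the sigma type Σ j, Fin (2mⱼ)). If k is an orthogonal matrix of this size commuting with M, then k is block diagonal with respect to this decomposition: every entry of k joining indices from distinct blocks j ≠ j' is zero, the j-th diagonal block [k]ⱼ is an orthogonal 2mⱼ×2mⱼ matrix commuting with J_{2mⱼ}, and consequently det k = 1. -/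
/-!
Squaring kills the `J`'s: `M² = -diag(μⱼ²)`, and the `μⱼ²` are pairwise distinct, so a matrix
commuting with `M` has no entries between distinct blocks. Block by block, `k` is then orthogonal
and commutes with `J_{2mⱼ}`. Ordering the basis as (even indices, odd indices) turns `J_{2m}` into
`[[0, 1], [-1, 0]]`, so a block commuting with it has the shape `[[A, B], [-B, A]]`, whose
determinant is `|det (A + iB)|² ≥ 0`. Orthogonality gives `(det)² = 1`, hence every block, and
so `k`, has determinant `1`.
-/

open Matrix

/-- Entries of the standard symplectic-type matrix built from `2×2` blocks
`J = [[0,1],[−1,0]]`, as a function of natural-number indices. -/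
def Jent (a b : ℕ) : ℝ :=
  if a / 2 = b / 2 then
    if a % 2 = 0 ∧ b % 2 = 1 then 1
    else if a % 2 = 1 ∧ b % 2 = 0 then -1
    else 0
  else 0

/-- `J_{2m}`, the `2m×2m` block-diagonal matrix with `m` diagonal blocks equal to `J`. -/
def J2m (m : ℕ) : Matrix (Fin (2 * m)) (Fin (2 * m)) ℝ :=
  Matrix.of fun a b => Jent a b

/-- The block-diagonal matrix with diagonal blocks `μ₁·J_{2m₁}, …, μ_{p₁}·J_{2m_{p₁}}`,
indexed by the sigma type `Σ j, Fin (2mⱼ)`. -/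
def blockM {p₁ : ℕ} (m : Fin p₁ → ℕ) (μ : Fin p₁ → ℝ) :
    Matrix ((j : Fin p₁) × Fin (2 * m j)) ((j : Fin p₁) × Fin (2 * m j)) ℝ :=
  Matrix.of fun x y => if x.1 = y.1 then μ x.1 * Jent x.2 y.2 else 0

/-- The `j`-th diagonal block `[k]ⱼ` of a matrix indexed by `Σ j, Fin (2mⱼ)`. -/
def diagBlock {p₁ : ℕ} {m : Fin p₁ → ℕ}
    (k : Matrix ((j : Fin p₁) × Fin (2 * m j)) ((j : Fin p₁) × Fin (2 * m j)) ℝ)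
    (j : Fin p₁) : Matrix (Fin (2 * m j)) (Fin (2 * m j)) ℝ :=
  Matrix.of fun a b => k ⟨j, a⟩ ⟨j, b⟩

namespace Matrix

section Commute

variable {n R : Type*} [Fintype n] [DecidableEq n] [CommRing R]

theorem apply_eq_zero_of_commute_diagonal [NoZeroDivisors R] {A : Matrix n n R} {d : n → R}
    (h : Commute A (diagonal d)) {x y : n} (hxy : d x ≠ d y) : A x y = 0 := by
  have hxy' : A x y * d y = d x * A x y := by
    simpa only [mul_diagonal, diagonal_mul] using congr_fun (congr_fun h.eq x) y
  have : (d x - d y) * A x y = 0 := by linear_combination -hxy'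
  exact (mul_eq_zero.1 this).resolve_left (sub_ne_zero.2 hxy)

theorem eq_fromBlocks_of_commute_J {A : Matrix (n ⊕ n) (n ⊕ n) R} (h : Commute A (J n R)) :
    A = fromBlocks A.toBlocks₁₁ A.toBlocks₁₂ (-A.toBlocks₁₂) A.toBlocks₁₁ := by
  have hA := h.eq
  rw [← fromBlocks_toBlocks A, J, fromBlocks_multiply, fromBlocks_multiply] at hA
  simp only [Matrix.mul_zero, Matrix.zero_mul, Matrix.mul_one, Matrix.one_mul, Matrix.mul_neg,
    Matrix.neg_mul, zero_add, add_zero, fromBlocks_inj] at hA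
  obtain ⟨h₁₂, h₁₁, -, -⟩ := hA
  nth_rewrite 1 [← fromBlocks_toBlocks A]
  rw [fromBlocks_inj]
  exact ⟨rfl, rfl, by rw [h₁₂, neg_neg], (neg_inj.1 h₁₁).symm⟩

end Commute

section BlockDiagonal

variable {o R : Type*} {m' n' : o → Type*} [DecidableEq o]

theorem blockDiagonal'_blockDiag'_of_apply_eq_zero [Zero R]
    {A : Matrix (Σ i, m' i) (Σ i, n' i) R} (h : ∀ x y, x.1 ≠ y.1 → A x y = 0) :
    blockDiagonal' (blockDiag' A) = A := by
  ext ⟨i, a⟩ ⟨j, b⟩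
  by_cases hij : i = j
  · subst hij
    rw [blockDiagonal'_apply_eq, blockDiag'_apply]
  · rw [blockDiagonal'_apply_ne _ _ _ hij, h _ _ hij]

variable [Fintype o] [∀ i, Fintype (m' i)]

theorem commute_blockDiagonal'_iff [NonUnitalNonAssocSemiring R]
    {D E : ∀ i, Matrix (m' i) (m' i) R} :
    Commute (blockDiagonal' D) (blockDiagonal' E) ↔ ∀ i, Commute (D i) (E i) := by
  simp only [Commute, SemiconjBy, ← blockDiagonal'_mul, blockDiagonal'_inj, funext_iff]

theorem blockDiagonal'_transpose_mul_self_eq_one_iff [∀ i, DecidableEq (m' i)]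
    [NonAssocSemiring R] {D : ∀ i, Matrix (m' i) (m' i) R} :
    (blockDiagonal' D)ᵀ * blockDiagonal' D = 1 ↔ ∀ i, (D i)ᵀ * D i = 1 := by
  rw [blockDiagonal'_transpose, ← blockDiagonal'_mul, ← blockDiagonal'_one, blockDiagonal'_inj,
    funext_iff]
  rfl

theorem det_blockDiagonal' [LinearOrder o] [∀ i, DecidableEq (m' i)] [CommRing R]
    (D : ∀ i, Matrix (m' i) (m' i) R) : (blockDiagonal' D).det = ∏ i, (D i).det := by
  rw [(blockTriangular_blockDiagonal' D).det_fintype]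
  refine Finset.prod_congr rfl fun i _ => ?_
  rw [← det_reindex_self (Equiv.sigmaSubtype i)]
  congr
  ext a b
  exact blockDiagonal'_apply_eq D i a b

end BlockDiagonal

open Complex in
theorem det_fromBlocks_neg_eq_normSq {n : Type*} [Fintype n] [DecidableEq n]
    (A B : Matrix n n ℝ) :
    (fromBlocks A B (-B) A).det = normSq (A.map ofReal + I • B.map ofReal).det := by
  set A' := A.map ofReal
  set B' := B.map ofReal
  set Z := A' + I • B'
  set L : Matrix (n ⊕ n) (n ⊕ n) ℂ := fromBlocks 1 0 (I • 1) 1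
  set R : Matrix (n ⊕ n) (n ⊕ n) ℂ := fromBlocks 1 0 (-I • 1) 1
  have hmap : (fromBlocks A B (-B) A).map ofReal = fromBlocks A' B' (-B') A' := by
    ext (i | i) (j | j) <;> simp [A', B']
  have hLR : L * fromBlocks A' B' (-B') A' * R = fromBlocks (A' - I • B') B' 0 Z := by
    simp only [L, R, Z, fromBlocks_multiply, Matrix.one_mul, Matrix.mul_one, Matrix.zero_mul,
      Matrix.mul_zero, Matrix.smul_mul, Matrix.mul_smul, add_zero, zero_add]
    congr 1 <;> match_scalars <;> simp
  have hconj : A' - I • B' = Z.map (starRingEnd ℂ) := by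
    ext i j
    simp [Z, A', B', sub_eq_add_neg]
  have hdet : ((fromBlocks A B (-B) A).det : ℂ) = Z.det * starRingEnd ℂ Z.det := by
    have hL : L.det = 1 := by simp [L]
    have hR : R.det = 1 := by simp [R]
    calc ((fromBlocks A B (-B) A).det : ℂ)
        = (L * fromBlocks A' B' (-B') A' * R).det := by
          rw [det_mul, det_mul, hL, hR, one_mul, mul_one, ← hmap]
          exact RingHom.map_det ofRealHom _
      _ = Z.det * starRingEnd ℂ Z.det := by
          rw [hLR, det_fromBlocks_zero₂₁, hconj, mul_comm, RingHom.map_det]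
          rfl
  exact_mod_cast hdet.trans (mul_conj Z.det)

end Matrix

def evenOddEquiv (n : ℕ) : Fin (2 * n) ≃ Fin n ⊕ Fin n where
  toFun a := if (a : ℕ) % 2 = 0 then .inl ⟨a / 2, by omega⟩ else .inr ⟨a / 2, by omega⟩
  invFun := Sum.elim (fun r => ⟨2 * r, by omega⟩) (fun r => ⟨2 * r + 1, by omega⟩)
  left_inv a := by
    by_cases h : (a : ℕ) % 2 = 0 <;> ext <;> simp [h] <;> omega
  right_inv x := by
    rcases x with r | r <;> simp [Fin.ext_iff]
    omega

theorem reindex_J2m (n : ℕ) :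
    reindex (evenOddEquiv n) (evenOddEquiv n) (J2m n) = -J (Fin n) ℝ := by
  ext (r | r) (s | s) <;>
    simp [evenOddEquiv, J2m, Jent, J, one_apply, Fin.ext_iff, Nat.mul_add_div]
  split_ifs <;> norm_num

theorem J2m_mul_self (n : ℕ) : J2m n * J2m n = -1 := by
  apply (reindexAlgEquiv ℝ ℝ (evenOddEquiv n)).injective
  rw [map_mul, map_neg, map_one, coe_reindexAlgEquiv, reindex_J2m, neg_mul_neg, J_squared]

theorem det_nonneg_of_commute_J2m {n : ℕ} {K : Matrix (Fin (2 * n)) (Fin (2 * n)) ℝ}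
    (h : Commute K (J2m n)) : 0 ≤ K.det := by
  have hK' : Commute (reindex (evenOddEquiv n) (evenOddEquiv n) K) (J (Fin n) ℝ) := by
    rw [← Commute.neg_right_iff, ← reindex_J2m]
    exact h.map (reindexAlgEquiv ℝ ℝ (evenOddEquiv n))
  rw [← det_reindex_self (evenOddEquiv n), eq_fromBlocks_of_commute_J hK',
    det_fromBlocks_neg_eq_normSq]
  exact Complex.normSq_nonneg _

theorem det_eq_one_of_orthogonal_of_commute_J2m {n : ℕ}
    {K : Matrix (Fin (2 * n)) (Fin (2 * n)) ℝ} (hK : Kᵀ * K = 1) (h : Commute K (J2m n)) :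
    K.det = 1 := by
  have hsq : K.det * K.det = 1 := by
    simpa only [det_mul, det_transpose, det_one] using congrArg det hK
  nlinarith [det_nonneg_of_commute_J2m h]

theorem blockM_eq_blockDiagonal' {p₁ : ℕ} (m : Fin p₁ → ℕ) (μ : Fin p₁ → ℝ) :
    blockM m μ = blockDiagonal' fun j => μ j • J2m (m j) := by
  ext ⟨i, a⟩ ⟨j, b⟩
  by_cases hij : i = j
  · subst hij
    simp [blockM, J2m]
  · simp [blockM, hij, blockDiagonal'_apply_ne]

theorem blockM_mul_self {p₁ : ℕ} (m : Fin p₁ → ℕ) (μ : Fin p₁ → ℝ) :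
    blockM m μ * blockM m μ = diagonal fun x => -μ x.1 ^ 2 := by
  rw [blockM_eq_blockDiagonal', ← blockDiagonal'_mul,
    ← blockDiagonal'_diagonal fun j _ => -μ j ^ 2]
  congr 1
  ext1 j
  rw [smul_mul_smul_comm, J2m_mul_self, smul_neg, smul_one_eq_diagonal, diagonal_neg, sq]

theorem orthogonal_commuting_blockM_structure_general
    {p₁ : ℕ} (m : Fin p₁ → ℕ) (μ : Fin p₁ → ℝ)
    (hμpos : ∀ j, 0 < μ j) (hμanti : StrictAnti μ)
    (k : Matrix ((j : Fin p₁) × Fin (2 * m j)) ((j : Fin p₁) × Fin (2 * m j)) ℝ)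
    (hk : kᵀ * k = 1) (hcomm : k * blockM m μ = blockM m μ * k) :
    (∀ x y : (j : Fin p₁) × Fin (2 * m j), x.1 ≠ y.1 → k x y = 0) ∧
    (∀ j : Fin p₁, (diagBlock k j)ᵀ * diagBlock k j = 1 ∧
      diagBlock k j * J2m (m j) = J2m (m j) * diagBlock k j) ∧
    k.det = 1 := by
  have hcomm : Commute k (blockM m μ) := hcomm
  have hoff : ∀ x y : (j : Fin p₁) × Fin (2 * m j), x.1 ≠ y.1 → k x y = 0 := by
    intro x y hxy
    refine apply_eq_zero_of_commute_diagonal (blockM_mul_self m μ ▸ hcomm.mul_right hcomm) ?_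
    rw [Ne, neg_inj, pow_left_inj₀ (hμpos _).le (hμpos _).le two_ne_zero]
    exact hμanti.injective.ne hxy
  have hk_eq : blockDiagonal' (diagBlock k) = k :=
    blockDiagonal'_blockDiag'_of_apply_eq_zero hoff
  have horth : ∀ j, (diagBlock k j)ᵀ * diagBlock k j = 1 := by
    rwa [← hk_eq, blockDiagonal'_transpose_mul_self_eq_one_iff] at hk
  have hJ : ∀ j, Commute (diagBlock k j) (J2m (m j)) := by
    rw [← hk_eq, blockM_eq_blockDiagonal', commute_blockDiagonal'_iff] at hcomm
    intro j
    simpa only [inv_smul_smul₀ (hμpos j).ne'] using (hcomm j).smul_right (μ j)⁻¹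
  refine ⟨hoff, fun j => ⟨horth j, hJ j⟩, ?_⟩
  rw [← hk_eq, det_blockDiagonal']
  exact Finset.prod_eq_one fun j _ => det_eq_one_of_orthogonal_of_commute_J2m (horth j) (hJ j)

/-- an orthogonal matrix commuting with the block-diagonal matrix `M` with
blocks `μⱼ·J_{2mⱼ}` (where `μ₁ > ⋯ > μ_{p₁} > 0` are distinct) is block diagonal;
each diagonal block `[k]ⱼ` is orthogonal and commutes with `J_{2mⱼ}`, and `det k = 1`. -/
theorem orthogonal_commuting_blockM_structure
    {p₁ : ℕ} (m : Fin p₁ → ℕ) (μ : Fin p₁ → ℝ)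
    (hm : ∀ j, 1 ≤ m j) (hμpos : ∀ j, 0 < μ j) (hμanti : StrictAnti μ)
    (k : Matrix ((j : Fin p₁) × Fin (2 * m j)) ((j : Fin p₁) × Fin (2 * m j)) ℝ)
    (hk : kᵀ * k = 1) (hcomm : k * blockM m μ = blockM m μ * k) :
    (∀ x y : (j : Fin p₁) × Fin (2 * m j), x.1 ≠ y.1 → k x y = 0) ∧
    (∀ j : Fin p₁, (diagBlock k j)ᵀ * diagBlock k j = 1 ∧
      diagBlock k j * J2m (m j) = J2m (m j) * diagBlock k j) ∧
    k.det = 1 :=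
  orthogonal_commuting_blockM_structure_general m μ hμpos hμanti k hk hcomm
end

section
/- Fix p ≥ 1 and a unit vector v₀ ∈ ℝ^p. For r ∈ ℝ let φ_r : ℝ^p → ℂ be φ_r(X) = ∫_{O(p)} exp(i·r·⟪v₀, k·X⟫) dk. Let (r_N) be a sequence of nonnegative reals and r ≥ 0. Then φ_{r_N} converges to φ_r uniformly on every compact subset of ℝ^p if and only if r_N → r. (This is Theorem 4.2: a sequence of 'type 2' bounded O(p)-spherical functions on the free two-step nilpotent group converges in the topology of Δ(O(p),F(p)), i.e. uniformly on compact sets, to a 'type 2' bounded O(p)-spherical function exactly when the parameters converge.) -/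
/-!
On the line `ℝ v₀`, `φ_r (t v₀)` is the characteristic function at `t` of the law of `r Y`, where
`Y k = ⟪v₀, k v₀⟫` under Haar measure. If `φ_{r_N} → φ_r` pointwise, Lévy's continuity theorem
gives convergence in distribution of `r_N Y` to `r Y`; testing against `x ↦ exp (-x²)` yields
`∫ exp (-(r_N Y)²) → ∫ exp (-(r Y)²)`. Since `Y` is continuous with `Y 1 = 1` and Haar measure
charges open sets, `a ↦ ∫ exp (-(a Y)²)` is strictly decreasing on `[0, ∞)`, which forces
`r_N → r`. Conversely, `(r, X) ↦ φ_r X` is jointly continuous, so `r_N → r` gives convergence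
in the compact-open topology, i.e. uniformly on compact sets.
-/

open Matrix MeasureTheory

noncomputable instance (p : ℕ) : MeasurableSpace (Matrix.orthogonalGroup (Fin p) ℝ) :=
  borel _

open Complex Filter Set Topology BoundedContinuousFunction

theorem StrictAntiOn.tendsto_of_tendsto_comp {α β ι : Type*} [LinearOrder α] [TopologicalSpace α]
    [OrderTopology α] [LinearOrder β] [TopologicalSpace β] [OrderTopology β] {g : α → β} {c : α}
    (hg : StrictAntiOn g (Ici c)) {l : Filter ι} {x : ι → α} {x₀ : α} (hx : ∀ i, c ≤ x i)
    (hx₀ : c ≤ x₀) (h : Tendsto (g ∘ x) l (𝓝 (g x₀))) : Tendsto x l (𝓝 x₀) := by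
  refine tendsto_order.2 ⟨fun a ha => ?_, fun b hb => ?_⟩
  · rcases lt_or_ge a c with hac | hca
    · exact Eventually.of_forall fun i => hac.trans_le (hx i)
    · filter_upwards [(tendsto_order.1 h).2 _ (hg hca hx₀ ha)] with i hi
      exact lt_of_not_ge fun hxa => hi.not_ge (hg.antitoneOn (hx i) hca hxa)
  · filter_upwards [(tendsto_order.1 h).1 _ (hg hx₀ (hx₀.trans hb.le) hb)] with i hi
    exact lt_of_not_ge fun hbx => hi.not_ge (hg.antitoneOn (hx₀.trans hb.le) (hx i) hbx)

theorem Continuous.tendstoUniformlyOn_of_tendsto {α β γ ι : Type*} [TopologicalSpace α]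
    [TopologicalSpace β] [UniformSpace γ] {F : α → β → γ} (hF : Continuous (Function.uncurry F))
    {l : Filter ι} {a : ι → α} {a₀ : α} (ha : Tendsto a l (𝓝 a₀)) {K : Set β} (hK : IsCompact K) :
    TendstoUniformlyOn (fun i => F (a i)) (F a₀) l K :=
  ContinuousMap.tendsto_iff_forall_isCompact_tendstoUniformlyOn.1
    (((ContinuousMap.curry ⟨_, hF⟩).continuous.tendsto a₀).comp ha) K hK

theorem tendsto_integral_comp_of_tendsto_charFun_map {E Ω : Type*} [NormedAddCommGroup E]
    [InnerProductSpace ℝ E] [FiniteDimensional ℝ E] [MeasurableSpace E] [BorelSpace E]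
    [MeasurableSpace Ω] {μ : Measure Ω} [IsProbabilityMeasure μ] {Z : ℕ → Ω → E} {Z₀ : Ω → E}
    (hZ : ∀ n, Measurable (Z n)) (hZ₀ : Measurable Z₀)
    (h : ∀ t, Tendsto (fun n => charFun (μ.map (Z n)) t) atTop (𝓝 (charFun (μ.map Z₀) t)))
    (g : E →ᵇ ℝ) : Tendsto (fun n => ∫ ω, g (Z n ω) ∂μ) atTop (𝓝 (∫ ω, g (Z₀ ω) ∂μ)) := by
  have hweak := ProbabilityMeasure.tendsto_of_tendsto_charFun
    (μ := fun n => ⟨μ.map (Z n), Measure.isProbabilityMeasure_map (hZ n).aemeasurable⟩)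
    (μ₀ := ⟨μ.map Z₀, Measure.isProbabilityMeasure_map hZ₀.aemeasurable⟩) h
  simpa [integral_map (hZ _).aemeasurable, integral_map hZ₀.aemeasurable,
    g.continuous.aestronglyMeasurable] using
    ProbabilityMeasure.tendsto_iff_forall_integral_tendsto.1 hweak g

theorem strictAntiOn_integral_exp_neg_sq_mul {Ω : Type*} [TopologicalSpace Ω] [MeasurableSpace Ω]
    [OpensMeasurableSpace Ω] (μ : Measure Ω) [IsFiniteMeasure μ] [μ.IsOpenPosMeasure]
    {Y : Ω → ℝ} (hY : Continuous Y) {ω₀ : Ω} (hω₀ : Y ω₀ ≠ 0) :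
    StrictAntiOn (fun a : ℝ => ∫ ω, Real.exp (-(a * Y ω) ^ 2) ∂μ) (Ici 0) := by
  intro a ha b hb hab
  have hint (c : ℝ) : Integrable (fun ω => Real.exp (-(c * Y ω) ^ 2)) μ :=
    .of_bound (by fun_prop : Continuous _).aestronglyMeasurable 1
      (Eventually.of_forall fun ω => by simp [sq_nonneg])
  have hsq_le (ω : Ω) : (a * Y ω) ^ 2 ≤ (b * Y ω) ^ 2 := by
    rw [mul_pow, mul_pow]
    gcongr
  have hsq_lt : (a * Y ω₀) ^ 2 < (b * Y ω₀) ^ 2 := by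
    rw [mul_pow, mul_pow]
    gcongr
  set f := fun ω => Real.exp (-(a * Y ω) ^ 2) - Real.exp (-(b * Y ω) ^ 2)
  have hf_nonneg : 0 ≤ f := fun ω => sub_nonneg.2 (Real.exp_le_exp.2 (neg_le_neg (hsq_le ω)))
  have hf_ω₀ : f ω₀ ≠ 0 := (sub_pos.2 (Real.exp_lt_exp.2 (neg_lt_neg hsq_lt))).ne'
  have hf_cont : Continuous f := by fun_prop
  have hf_pos := (integral_pos_iff_support_of_nonneg hf_nonneg ((hint a).sub (hint b))).2
    (hf_cont.isOpen_support.measure_pos μ ⟨ω₀, hf_ω₀⟩)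
  rw [integral_sub (hint a) (hint b)] at hf_pos
  exact sub_pos.1 hf_pos

instance (p : ℕ) : BorelSpace (orthogonalGroup (Fin p) ℝ) := ⟨rfl⟩

section Spherical

variable {p : ℕ} (v₀ : Fin p → ℝ) (μ : Measure (orthogonalGroup (Fin p) ℝ))

noncomputable def sphericalFunction (r : ℝ) (X : Fin p → ℝ) : ℂ :=
  ∫ k : orthogonalGroup (Fin p) ℝ,
    cexp (I * r * ((v₀ ⬝ᵥ (k : Matrix (Fin p) (Fin p) ℝ) *ᵥ X : ℝ) : ℂ)) ∂μ

theorem continuous_dotProduct_mulVec (X : Fin p → ℝ) :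
    Continuous fun k : orthogonalGroup (Fin p) ℝ => v₀ ⬝ᵥ (k : Matrix (Fin p) (Fin p) ℝ) *ᵥ X :=
  continuous_const.dotProduct (continuous_subtype_val.matrix_mulVec continuous_const)

theorem continuous_uncurry_sphericalFunction [IsFiniteMeasure μ] :
    Continuous (Function.uncurry (sphericalFunction v₀ μ)) := by
  refine continuous_of_dominated (bound := fun _ => 1) (fun q => ?_) (fun q => ?_)
    (integrable_const 1) (Eventually.of_forall fun k => ?_)
  · exact (by fun_prop : Continuous _).aestronglyMeasurable
  · exact Eventually.of_forall fun k => by simp [Complex.norm_exp]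
  · fun_prop

theorem sphericalFunction_smul_self (a t : ℝ) :
    sphericalFunction v₀ μ a (t • v₀) =
      charFun (μ.map fun k : orthogonalGroup (Fin p) ℝ =>
        a * (v₀ ⬝ᵥ (k : Matrix (Fin p) (Fin p) ℝ) *ᵥ v₀)) t := by
  rw [charFun_apply_real,
    integral_map ((continuous_dotProduct_mulVec v₀ v₀).const_mul a).aemeasurable (by fun_prop)]
  simp only [sphericalFunction, mulVec_smul, dotProduct_smul, smul_eq_mul]
  congr! 3
  push_cast
  ring

end Spherical

theorem type2_spherical_tendstoUniformlyOn_iff_general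
    (p : ℕ) (v₀ : Fin p → ℝ) (hv₀ : v₀ ⬝ᵥ v₀ = 1)
    (μK : Measure (Matrix.orthogonalGroup (Fin p) ℝ))
    [μK.IsHaarMeasure] [IsProbabilityMeasure μK]
    (rseq : ℕ → ℝ) (hrseq : ∀ N, 0 ≤ rseq N) (r : ℝ) (hr : 0 ≤ r) :
    (∀ S : Set (Fin p → ℝ), IsCompact S →
        TendstoUniformlyOn
          (fun N X => ∫ k : Matrix.orthogonalGroup (Fin p) ℝ,
            Complex.exp (Complex.I * (rseq N : ℂ) *
              ((v₀ ⬝ᵥ (k : Matrix (Fin p) (Fin p) ℝ).mulVec X : ℝ) : ℂ)) ∂μK)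
          (fun X => ∫ k : Matrix.orthogonalGroup (Fin p) ℝ,
            Complex.exp (Complex.I * (r : ℂ) *
              ((v₀ ⬝ᵥ (k : Matrix (Fin p) (Fin p) ℝ).mulVec X : ℝ) : ℂ)) ∂μK)
          Filter.atTop S) ↔
      Filter.Tendsto rseq Filter.atTop (nhds r) := by
  change (∀ S, IsCompact S → TendstoUniformlyOn (fun N => sphericalFunction v₀ μK (rseq N))
    (sphericalFunction v₀ μK r) atTop S) ↔ _
  refine ⟨fun h => ?_, fun h S hS =>
    (continuous_uncurry_sphericalFunction v₀ μK).tendstoUniformlyOn_of_tendsto h hS⟩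
  set Y := fun k : orthogonalGroup (Fin p) ℝ => v₀ ⬝ᵥ (k : Matrix (Fin p) (Fin p) ℝ) *ᵥ v₀
  have hY : Continuous Y := continuous_dotProduct_mulVec v₀ v₀
  have hY₁ : Y 1 ≠ 0 := by simp [Y, hv₀]
  have hcharFun (t : ℝ) : Tendsto (fun N => charFun (μK.map (rseq N * Y ·)) t) atTop
      (𝓝 (charFun (μK.map (r * Y ·)) t)) := by
    simpa only [sphericalFunction_smul_self] using
      (h {t • v₀} isCompact_singleton).tendsto_at rfl
  let gaussian : ℝ →ᵇ ℝ :=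
    .ofNormedAddCommGroup (fun x => Real.exp (-x ^ 2)) (by fun_prop) 1 fun x => by simp [sq_nonneg]
  exact (strictAntiOn_integral_exp_neg_sq_mul μK hY hY₁).tendsto_of_tendsto_comp hrseq hr
    (tendsto_integral_comp_of_tendsto_charFun_map (fun N => (hY.const_mul _).measurable)
      (hY.const_mul _).measurable hcharFun gaussian)

/-- Theorem 4.2: for a sequence of nonnegative parameters `r_N` and `r ≥ 0`,
the 'type 2' bounded `O(p)`-spherical functions
`φ_r(X) = ∫_{O(p)} exp(i·r·⟪v₀, k·X⟫) dk` satisfy: `φ_{r_N} → φ_r` uniformly on every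
compact subset of `ℝ^p` if and only if `r_N → r`. -/
theorem type2_spherical_tendstoUniformlyOn_iff
    (p : ℕ) (hp : 1 ≤ p) (v₀ : Fin p → ℝ) (hv₀ : v₀ ⬝ᵥ v₀ = 1)
    (μK : Measure (Matrix.orthogonalGroup (Fin p) ℝ))
    [μK.IsHaarMeasure] [IsProbabilityMeasure μK]
    (rseq : ℕ → ℝ) (hrseq : ∀ N, 0 ≤ rseq N) (r : ℝ) (hr : 0 ≤ r) :
    (∀ S : Set (Fin p → ℝ), IsCompact S →
        TendstoUniformlyOn
          (fun N X => ∫ k : Matrix.orthogonalGroup (Fin p) ℝ,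
            Complex.exp (Complex.I * (rseq N : ℂ) *
              ((v₀ ⬝ᵥ (k : Matrix (Fin p) (Fin p) ℝ).mulVec X : ℝ) : ℂ)) ∂μK)
          (fun X => ∫ k : Matrix.orthogonalGroup (Fin p) ℝ,
            Complex.exp (Complex.I * (r : ℂ) *
              ((v₀ ⬝ᵥ (k : Matrix (Fin p) (Fin p) ℝ).mulVec X : ℝ) : ℂ)) ∂μK)
          Filter.atTop S) ↔
      Filter.Tendsto rseq Filter.atTop (nhds r) :=
  type2_spherical_tendstoUniformlyOn_iff_general p v₀ hv₀ μK rseq hrseq r hr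
end

section
/- Fix p ≥ 1 and a unit vector v₀ ∈ ℝ^p. For r ∈ ℝ let φ_r : ℝ^p → ℂ be φ_r(X) = ∫_{O(p)} exp(i·r·⟪v₀, k·X⟫) dk. If r, r' ≥ 0 and φ_r(X) = φ_{r'}(X) for all X ∈ ℝ^p, then r = r'; i.e., the parametrization of the 'type 2' bounded O(p)-spherical functions by r ∈ [0,∞) is injective. -/
/-!
Write `w(k) = kᵀv₀`, so that `φ_r(X) = ∫ exp(i r ⟪w(k), X⟫) dk` is the characteristic function of
the law `ν` of `w` evaluated at `r X`. If `φ_r = φ_{r'}` with `0 ≤ r < r'`, then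
`χ_ν(t) = χ_ν((r/r') t) = χ_ν((r/r')ⁿ t) → χ_ν(0) = 1`, so `ν` is the Dirac mass at `0`. But `w`
never vanishes, since `k` is invertible and `v₀ ≠ 0`.
-/

open Matrix MeasureTheory

open Complex
open scoped RealInnerProductSpace

namespace MeasureTheory

variable {E : Type*} [NormedAddCommGroup E] [InnerProductSpace ℝ E]
  [MeasurableSpace E] [BorelSpace E] [SecondCountableTopology E] {μ : Measure E}

lemma charFun_eq_charFun_zero_of_charFun_smul_eq [IsFiniteMeasure μ] {c : ℝ} (hc : |c| < 1)
    (h : ∀ t, charFun μ (c • t) = charFun μ t) (t : E) :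
    charFun μ t = charFun μ 0 := by
  have hiter : ∀ n : ℕ, charFun μ ((c ^ n) • t) = charFun μ t := by
    intro n
    induction n with
    | zero => rw [pow_zero, one_smul]
    | succ n ih => rw [pow_succ', mul_smul, h, ih]
  have hlim : Filter.Tendsto (fun n : ℕ => charFun μ ((c ^ n) • t)) Filter.atTop
      (nhds (charFun μ ((0 : ℝ) • t))) :=
    (continuous_charFun.tendsto _).comp
      ((tendsto_pow_atTop_nhds_zero_of_abs_lt_one hc).smul_const t)
  rw [zero_smul] at hlim
  simp only [hiter] at hlim
  exact tendsto_nhds_unique tendsto_const_nhds hlim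

lemma eq_dirac_zero_of_charFun_smul_eq [CompleteSpace E] [IsProbabilityMeasure μ] {r r' : ℝ}
    (hrr : |r| ≠ |r'|) (h : ∀ t, charFun μ (r • t) = charFun μ (r' • t)) :
    μ = Measure.dirac 0 := by
  wlog hlt : |r| < |r'| generalizing r r'
  · exact this hrr.symm (fun t => (h t).symm) (lt_of_le_of_ne (not_lt.mp hlt) hrr.symm)
  have hr' : r' ≠ 0 := abs_pos.mp ((abs_nonneg r).trans_lt hlt)
  have hc : |r / r'| < 1 := by rwa [abs_div, div_lt_one (abs_pos.mpr hr')]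
  have hcontr : ∀ t, charFun μ ((r / r') • t) = charFun μ t := fun t => by
    simpa only [smul_smul, div_eq_mul_inv, mul_inv_cancel₀ hr', one_smul] using h (r'⁻¹ • t)
  refine Measure.ext_of_charFun (funext fun t => ?_)
  rw [charFun_eq_charFun_zero_of_charFun_smul_eq hc hcontr, charFun_zero, charFun_dirac]
  simp

end MeasureTheory

lemma vecMul_ne_zero_of_mem_orthogonalGroup {n : Type*} [Fintype n] [DecidableEq n]
    {v : n → ℝ} (hv : v ≠ 0) (k : orthogonalGroup n ℝ) : v ᵥ* (k : Matrix n n ℝ) ≠ 0 := by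
  intro hk
  apply hv
  rw [← vecMul_one v, ← (mem_orthogonalGroup_iff n ℝ).mp k.2, ← vecMul_vecMul, hk, zero_vecMul]

instance inst_s10 (p : ℕ) : BorelSpace (orthogonalGroup (Fin p) ℝ) := ⟨rfl⟩

def vecMulEuclidean {n : Type*} [Fintype n] [DecidableEq n] (v : n → ℝ)
    (k : orthogonalGroup n ℝ) : EuclideanSpace ℝ n :=
  WithLp.toLp 2 (v ᵥ* (k : Matrix n n ℝ))

lemma continuous_vecMulEuclidean {n : Type*} [Fintype n] [DecidableEq n] (v : n → ℝ) :
    Continuous (vecMulEuclidean v) :=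
  (PiLp.continuous_toLp 2 _).comp (continuous_const.matrix_vecMul continuous_subtype_val)

lemma integral_exp_dotProduct_mulVec_eq_charFun_map {p : ℕ}
    (μ : Measure (orthogonalGroup (Fin p) ℝ)) (v X : Fin p → ℝ) (r : ℝ) :
    ∫ k : orthogonalGroup (Fin p) ℝ,
        exp (I * (r : ℂ) * ((v ⬝ᵥ (k : Matrix (Fin p) (Fin p) ℝ).mulVec X : ℝ) : ℂ)) ∂μ =
      charFun (μ.map (vecMulEuclidean v)) (r • WithLp.toLp 2 X) := by
  rw [charFun_apply,
    integral_map (continuous_vecMulEuclidean v).measurable.aemeasurable (by fun_prop)]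
  congr 1 with k
  rw [inner_smul_right, EuclideanSpace.inner_eq_star_dotProduct, dotProduct_mulVec,
    vecMulEuclidean, star_trivial, dotProduct_comm]
  push_cast
  ring_nf

theorem type2_spherical_parametrization_injective_general
    (p : ℕ) (v₀ : Fin p → ℝ) (hv₀ : v₀ ⬝ᵥ v₀ = 1)
    (μK : Measure (Matrix.orthogonalGroup (Fin p) ℝ))
    [IsProbabilityMeasure μK]
    (r r' : ℝ) (hr : 0 ≤ r) (hr' : 0 ≤ r')
    (h : ∀ X : Fin p → ℝ,
      (∫ k : Matrix.orthogonalGroup (Fin p) ℝ,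
        Complex.exp (Complex.I * (r : ℂ) *
          ((v₀ ⬝ᵥ (k : Matrix (Fin p) (Fin p) ℝ).mulVec X : ℝ) : ℂ)) ∂μK) =
      (∫ k : Matrix.orthogonalGroup (Fin p) ℝ,
        Complex.exp (Complex.I * (r' : ℂ) *
          ((v₀ ⬝ᵥ (k : Matrix (Fin p) (Fin p) ℝ).mulVec X : ℝ) : ℂ)) ∂μK)) :
    r = r' := by
  by_contra hne
  have hrr : |r| ≠ |r'| := by rwa [abs_of_nonneg hr, abs_of_nonneg hr']
  have := Measure.isProbabilityMeasure_map (μ := μK) (continuous_vecMulEuclidean v₀).aemeasurable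
  have hdirac : μK.map (vecMulEuclidean v₀) = Measure.dirac 0 :=
    eq_dirac_zero_of_charFun_smul_eq hrr fun t => by
      simpa only [integral_exp_dotProduct_mulVec_eq_charFun_map] using h t.ofLp
  have hv₀ne : v₀ ≠ 0 := by rintro rfl; simp at hv₀
  have hnull : μK.map (vecMulEuclidean v₀) {0} = 0 := by
    rw [Measure.map_apply (continuous_vecMulEuclidean v₀).measurable (measurableSet_singleton 0)]
    have hempty : vecMulEuclidean v₀ ⁻¹' {0} = ∅ := Set.eq_empty_of_forall_notMem fun k hk =>
      vecMul_ne_zero_of_mem_orthogonalGroup hv₀ne k (congrArg WithLp.ofLp hk)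
    rw [hempty, measure_empty]
  simp [hdirac] at hnull

/-- the parametrization `r ↦ φ_r` of the 'type 2' bounded
`O(p)`-spherical functions `φ_r(X) = ∫_{O(p)} exp(i·r·⟪v₀, k·X⟫) dk` by `r ∈ [0,∞)`
is injective. -/
theorem type2_spherical_parametrization_injective
    (p : ℕ) (hp : 1 ≤ p) (v₀ : Fin p → ℝ) (hv₀ : v₀ ⬝ᵥ v₀ = 1)
    (μK : Measure (Matrix.orthogonalGroup (Fin p) ℝ))
    [μK.IsHaarMeasure] [IsProbabilityMeasure μK]
    (r r' : ℝ) (hr : 0 ≤ r) (hr' : 0 ≤ r')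
    (h : ∀ X : Fin p → ℝ,
      (∫ k : Matrix.orthogonalGroup (Fin p) ℝ,
        Complex.exp (Complex.I * (r : ℂ) *
          ((v₀ ⬝ᵥ (k : Matrix (Fin p) (Fin p) ℝ).mulVec X : ℝ) : ℂ)) ∂μK) =
      (∫ k : Matrix.orthogonalGroup (Fin p) ℝ,
        Complex.exp (Complex.I * (r' : ℂ) *
          ((v₀ ⬝ᵥ (k : Matrix (Fin p) (Fin p) ℝ).mulVec X : ℝ) : ℂ)) ∂μK)) :
    r = r' :=
  type2_spherical_parametrization_injective_general p v₀ hv₀ μK r r' hr hr' h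
end
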